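/- Decay rate of the angular momentum at a collision: if y is an isolated collision solution at the origin and J(t) = Im(conj(y(t))·ẏ(t)), then there exist C > 0 and δ₀ ∈ (0, δ] such that |J(t)| ≤ C·|t|^{(4+α)/(2+α)} for all t ∈ [−δ₀, δ₀] \ {0}. -/

import Mathlib

/-!
Near the collision the origin is the nearest centre, so the energy identity bounds the velocity
by `‖ẏ‖ ≤ K ‖y‖ ^ (-α/2)`. Hence `‖y‖ ^ (1 + α/2)` is Lipschitz and vanishes at `0`, which is
Sundman's estimate `‖y t‖ = O(|t| ^ (2/(2+α)))`. The centre at the origin exerts no torque, so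
`J̇ = Im (ȳ ÿ) = O(‖y‖) = O(|t| ^ (2/(2+α)))`. Finally `|J| ≤ ‖y‖ ‖ẏ‖ = O(‖y‖ ^ (1 - α/2))`
tends to `0` because `α < 2`, so `J` is continuous with `J 0 = 0`, and the mean value theorem
gives `J t = O(|t| ^ (2/(2+α) + 1))`.
-/

open Filter Topology Set ComplexConjugate

lemma exists_mem_uIoo_deriv_eq_slope {f : ℝ → ℝ} {a b : ℝ} (hab : a ≠ b)
    (hf : ContinuousOn f (uIcc a b)) (hf' : ∀ x ∈ uIoo a b, DifferentiableAt ℝ f x) :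
    ∃ c ∈ uIoo a b, deriv f c = (f b - f a) / (b - a) := by
  rcases hab.lt_or_gt with h | h
  · rw [uIcc_of_lt h] at hf
    rw [uIoo_of_lt h] at hf' ⊢
    exact exists_deriv_eq_slope f h hf fun x hx => (hf' x hx).differentiableWithinAt
  · rw [uIcc_of_gt h] at hf
    rw [uIoo_of_gt h] at hf' ⊢
    obtain ⟨c, hc, hslope⟩ :=
      exists_deriv_eq_slope f h hf fun x hx => (hf' x hx).differentiableWithinAt
    exact ⟨c, hc, by rw [hslope, ← neg_div_neg_eq, neg_sub, neg_sub]⟩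

lemma abs_le_mul_abs_rpow_of_abs_deriv_le {f : ℝ → ℝ} {d M p t : ℝ} (hp : 0 ≤ p)
    (hf : ContinuousOn f (Icc (-d) d)) (hf0 : f 0 = 0)
    (hdf : ∀ s ∈ Icc (-d) d, s ≠ 0 → DifferentiableAt ℝ f s)
    (hf' : ∀ s ∈ Icc (-d) d, s ≠ 0 → |deriv f s| ≤ M * |s| ^ p) (ht : t ∈ Icc (-d) d) :
    |f t| ≤ M * |t| ^ (p + 1) := by
  rcases eq_or_ne t 0 with rfl | ht0
  · simp [hf0, Real.zero_rpow (by positivity : p + 1 ≠ 0)]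
  have h0 : (0 : ℝ) ∈ Icc (-d) d := ⟨by linarith [ht.1, ht.2], by linarith [ht.1, ht.2]⟩
  have hsub : uIcc 0 t ⊆ Icc (-d) d := uIcc_subset_Icc h0 ht
  have hmem : ∀ s ∈ uIoo 0 t, s ∈ Icc (-d) d ∧ s ≠ 0 := fun s hs =>
    ⟨hsub (uIoo_subset_uIcc_self hs), fun h => left_notMem_uIoo (h ▸ hs)⟩
  obtain ⟨s, hs, hslope⟩ := exists_mem_uIoo_deriv_eq_slope ht0.symm (hf.mono hsub)
    fun s hs => hdf s (hmem s hs).1 (hmem s hs).2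
  obtain ⟨hsd, hs0⟩ := hmem s hs
  have hst : |s| ≤ |t| := by
    simpa using abs_sub_left_of_mem_uIcc (uIoo_subset_uIcc_self hs)
  have hM : 0 ≤ M := nonneg_of_mul_nonneg_left ((abs_nonneg _).trans (hf' s hsd hs0))
    (Real.rpow_pos_of_pos (abs_pos.2 hs0) p)
  rw [hf0, sub_zero, sub_zero, eq_div_iff ht0] at hslope
  calc |f t| = |deriv f s| * |t| := by rw [← hslope, abs_mul]
    _ ≤ M * |s| ^ p * |t| := by gcongr; exact hf' s hsd hs0
    _ ≤ M * |t| ^ p * |t| := by gcongr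
    _ = M * |t| ^ (p + 1) := by rw [Real.rpow_add_one (abs_ne_zero.2 ht0), mul_assoc]

lemma HasDerivAt.norm_rpow {F : Type*} [NormedAddCommGroup F] [InnerProductSpace ℝ F]
    {u : ℝ → F} {u' : F} {t p : ℝ} (hu : HasDerivAt u u' t) (hp : 1 < p) :
    HasDerivAt (fun s => ‖u s‖ ^ p) (p * ‖u t‖ ^ (p - 2) * Inner.inner ℝ (u t) u') t := by
  refine ((hasFDerivAt_norm_rpow (u t) hp).comp_hasDerivAt t hu).congr_deriv ?_
  simp [mul_assoc]

lemma norm_le_rpow_of_norm_rpow_mul_norm_deriv_le {F : Type*} [NormedAddCommGroup F]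
    [InnerProductSpace ℝ F] {u : ℝ → F} {d β K t : ℝ} (hβ : 0 < β)
    (hu : ContinuousOn u (Icc (-d) d)) (hu0 : u 0 = 0)
    (hdu : ∀ s ∈ Icc (-d) d, s ≠ 0 → DifferentiableAt ℝ u s)
    (hK : ∀ s ∈ Icc (-d) d, s ≠ 0 → ‖u s‖ ^ β * ‖deriv u s‖ ≤ K) (ht : t ∈ Icc (-d) d) :
    ‖u t‖ ≤ ((β + 1) * K * |t|) ^ (β + 1)⁻¹ := by
  have hp : 1 < β + 1 := by linarith
  have hderiv : ∀ s ∈ Icc (-d) d, s ≠ 0 → HasDerivAt (fun s => ‖u s‖ ^ (β + 1))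
      ((β + 1) * ‖u s‖ ^ (β + 1 - 2) * inner ℝ (u s) (deriv u s)) s := fun s hs hs0 =>
    HasDerivAt.norm_rpow (hdu s hs hs0).hasDerivAt hp
  have hbound : ∀ s ∈ Icc (-d) d, s ≠ 0 →
      |deriv (fun s => ‖u s‖ ^ (β + 1)) s| ≤ (β + 1) * K * |s| ^ (0 : ℝ) := by
    intro s hs hs0
    rw [(hderiv s hs hs0).deriv, Real.rpow_zero, mul_one, abs_mul, abs_mul,
      abs_of_pos (by linarith : 0 < β + 1), abs_of_nonneg (by positivity), mul_assoc]
    gcongr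
    calc ‖u s‖ ^ (β + 1 - 2) * |inner ℝ (u s) (deriv u s)|
        ≤ ‖u s‖ ^ (β + 1 - 2) * (‖u s‖ * ‖deriv u s‖) := by
          gcongr; exact abs_real_inner_le_norm _ _
      _ = ‖u s‖ ^ β * ‖deriv u s‖ := by
          rw [← mul_assoc, ← Real.rpow_add_one' (norm_nonneg _) (by linarith)]
          ring_nf
      _ ≤ K := hK s hs hs0
  have h := abs_le_mul_abs_rpow_of_abs_deriv_le le_rfl
    ((hu.norm).rpow_const fun _ _ => Or.inr (by linarith))
    (by simp [hu0, Real.zero_rpow (by linarith : β + 1 ≠ 0)])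
    (fun s hs hs0 => (hderiv s hs hs0).differentiableAt) hbound ht
  rw [abs_of_nonneg (by positivity), zero_add, Real.rpow_one] at h
  exact (Real.le_rpow_inv_iff_of_pos (norm_nonneg _) ((by positivity : (0:ℝ) ≤ _).trans h)
    (by linarith)).2 h

lemma abs_im_conj_mul_le (z w : ℂ) : |(conj z * w).im| ≤ ‖z‖ * ‖w‖ :=
  (Complex.abs_im_le_norm _).trans_eq (by rw [norm_mul, Complex.norm_conj])

lemma hasDerivAt_im_conj_mul_deriv {u : ℝ → ℂ} {t : ℝ} (hu : DifferentiableAt ℝ u t)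
    (hu' : DifferentiableAt ℝ (deriv u) t) :
    HasDerivAt (fun s => (conj (u s) * deriv u s).im) (conj (u t) * deriv (deriv u) t).im t := by
  have h := HasDerivAt.mul (HasDerivAt.star hu.hasDerivAt) hu'.hasDerivAt
  refine (Complex.imCLM.hasFDerivAt.comp_hasDerivAt t h).congr_deriv ?_
  simp [Complex.conj_mul', ← Complex.ofReal_pow]

lemma continuousOn_im_conj_mul_deriv {u : ℝ → ℂ} {d β K : ℝ} (hβ : β < 1)
    (hu : ContinuousOn u (Icc (-d) d)) (hu0 : u 0 = 0)
    (hdu : ∀ t ∈ Icc (-d) d, t ≠ 0 → DifferentiableAt ℝ u t)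
    (hddu : ∀ t ∈ Icc (-d) d, t ≠ 0 → DifferentiableAt ℝ (deriv u) t)
    (hK : ∀ t ∈ Icc (-d) d, t ≠ 0 → ‖u t‖ ^ β * ‖deriv u t‖ ≤ K) :
    ContinuousOn (fun t => (conj (u t) * deriv u t).im) (Icc (-d) d) := by
  intro t ht
  rcases ne_or_eq t 0 with ht0 | rfl
  · exact (hasDerivAt_im_conj_mul_deriv (hdu t ht ht0) (hddu t ht ht0)).continuousAt
      |>.continuousWithinAt
  have hβ' : (1 - β) + β ≠ 0 := by linarith
  have hbound : ∀ s ∈ Icc (-d) d, ‖(conj (u s) * deriv u s).im‖ ≤ K * ‖u s‖ ^ (1 - β) := by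
    intro s hs
    rcases ne_or_eq s 0 with hs0 | rfl
    · calc ‖(conj (u s) * deriv u s).im‖ ≤ ‖u s‖ * ‖deriv u s‖ := abs_im_conj_mul_le _ _
        _ = ‖u s‖ ^ (1 - β) * (‖u s‖ ^ β * ‖deriv u s‖) := by
          rw [← mul_assoc, ← Real.rpow_add' (norm_nonneg _) hβ', sub_add_cancel, Real.rpow_one]
        _ ≤ ‖u s‖ ^ (1 - β) * K := by gcongr; exact hK s hs hs0
        _ = K * ‖u s‖ ^ (1 - β) := mul_comm _ _
    · simp [hu0, Real.zero_rpow (by linarith : 1 - β ≠ 0)]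
  have hlim : Tendsto (fun s => K * ‖u s‖ ^ (1 - β)) (𝓝[Icc (-d) d] 0) (𝓝 0) := by
    have h := ((hu 0 ht).norm.rpow_const (Or.inr (by linarith : 0 ≤ 1 - β))).const_mul K
    simpa [ContinuousWithinAt, hu0, Real.zero_rpow (by linarith : 1 - β ≠ 0)] using h
  simpa [ContinuousWithinAt, hu0] using
    squeeze_zero_norm' (eventually_nhdsWithin_of_forall hbound) hlim

theorem abs_im_conj_mul_deriv_le {u : ℝ → ℂ} {d β K M t : ℝ} (hβ0 : 0 < β) (hβ1 : β < 1)
    (hM : 0 ≤ M) (hu : ContinuousOn u (Icc (-d) d)) (hu0 : u 0 = 0)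
    (hdu : ∀ s ∈ Icc (-d) d, s ≠ 0 → DifferentiableAt ℝ u s)
    (hddu : ∀ s ∈ Icc (-d) d, s ≠ 0 → DifferentiableAt ℝ (deriv u) s)
    (hK : ∀ s ∈ Icc (-d) d, s ≠ 0 → ‖u s‖ ^ β * ‖deriv u s‖ ≤ K)
    (htorque : ∀ s ∈ Icc (-d) d, s ≠ 0 → |(conj (u s) * deriv (deriv u) s).im| ≤ M * ‖u s‖)
    (ht : t ∈ Icc (-d) d) :
    |(conj (u t) * deriv u t).im| ≤ M * ((β + 1) * K) ^ (β + 1)⁻¹ * |t| ^ ((β + 2) / (β + 1)) := by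
  have hexp : (β + 2) / (β + 1) = (β + 1)⁻¹ + 1 := by field_simp; ring
  rw [hexp]
  refine abs_le_mul_abs_rpow_of_abs_deriv_le (by positivity)
    (continuousOn_im_conj_mul_deriv hβ1 hu hu0 hdu hddu hK) (by simp [hu0])
    (fun s hs hs0 => (hasDerivAt_im_conj_mul_deriv (hdu s hs hs0) (hddu s hs hs0)).differentiableAt)
    (fun s hs hs0 => ?_) ht
  have hK0 : 0 ≤ K := (mul_nonneg (by positivity) (norm_nonneg _)).trans (hK s hs hs0)
  rw [(hasDerivAt_im_conj_mul_deriv (hdu s hs hs0) (hddu s hs hs0)).deriv, mul_assoc,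
    ← Real.mul_rpow (by positivity) (abs_nonneg s)]
  exact (htorque s hs hs0).trans <| mul_le_mul_of_nonneg_left
    (norm_le_rpow_of_norm_rpow_mul_norm_deriv_le hβ0 hu hu0 hdu hK hs) hM

lemma exists_pos_le_norm_sub_of_norm_le {ι E : Type*} [Finite ι] [NormedAddCommGroup E]
    (c : ι → E) : ∃ r, 0 < r ∧ r ≤ 1 ∧ ∀ x, ‖x‖ ≤ r → ∀ j, c j ≠ 0 → r ≤ ‖x - c j‖ := by
  have hsmall : ∀ j, ∀ᶠ r in 𝓝 (0 : ℝ), c j ≠ 0 → 2 * r ≤ ‖c j‖ := by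
    intro j
    rcases eq_or_ne (c j) 0 with hj | hj
    · simp [hj]
    have h2r : Tendsto (fun r : ℝ => 2 * r) (𝓝 0) (𝓝 0) := by
      simpa using (tendsto_id (x := 𝓝 (0 : ℝ))).const_mul 2
    exact (h2r.eventually (eventually_le_nhds (norm_pos_iff.2 hj))).mono fun _ h _ => h
  obtain ⟨r, ⟨hr1, hrc⟩, hr0⟩ :=
    ((((eventually_le_nhds one_pos).and (eventually_all.2 hsmall)).filter_mono
      nhdsWithin_le_nhds).and (self_mem_nhdsWithin (s := Ioi 0))).exists
  refine ⟨r, hr0, hr1, fun x hx j hj => ?_⟩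
  have := hrc j hj
  have := norm_sub_norm_le (c j) x
  rw [norm_sub_rev] at this
  linarith

lemma exists_pos_forall_mem_Icc_norm_le {E : Type*} [NormedAddCommGroup E] {u : ℝ → E}
    {δ r : ℝ} (hδ : 0 < δ) (hu : ContinuousOn u (Icc (-δ) δ)) (hu0 : u 0 = 0) (hr : 0 < r) :
    ∃ d, 0 < d ∧ d ≤ δ ∧ ∀ t ∈ Icc (-d) d, ‖u t‖ ≤ r := by
  have hcont : ContinuousAt u 0 := hu.continuousAt (Icc_mem_nhds (by linarith) hδ)
  obtain ⟨η, hη, hball⟩ := Metric.continuousAt_iff.1 hcont r hr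
  refine ⟨min δ (η / 2), by positivity, min_le_left _ _, fun t ht => ?_⟩
  have ht' : |t| ≤ η / 2 := (abs_le.2 ht).trans (min_le_right _ _)
  simpa [hu0] using (hball (by rw [Real.dist_eq, sub_zero]; linarith)).le

namespace NCenter

variable {ι : Type*} [Fintype ι]

noncomputable def potential (c : ι → ℂ) (m : ι → ℝ) (α : ℝ) (x : ℂ) : ℝ :=
  ∑ j, m j / (α * ‖x - c j‖ ^ α)

noncomputable def force (c : ι → ℂ) (m : ι → ℝ) (α : ℝ) (x : ℂ) : ℂ :=
  -∑ j, (m j : ℂ) * (x - c j) / ((‖x - c j‖ ^ (α + 2) : ℝ) : ℂ)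

variable {c : ι → ℂ} {m : ι → ℝ} {α : ℝ} {x : ℂ}

lemma potential_le (hm : ∀ j, 0 ≤ m j) (hα : 0 < α) (hx : 0 < ‖x‖)
    (hnear : ∀ j, ‖x‖ ≤ ‖x - c j‖) : potential c m α x ≤ (∑ j, m j / α) / ‖x‖ ^ α := by
  rw [potential, Finset.sum_div]
  refine Finset.sum_le_sum fun j _ => ?_
  rw [div_div]
  exact div_le_div_of_nonneg_left (hm j) (by positivity)
    (mul_le_mul_of_nonneg_left (Real.rpow_le_rpow hx.le (hnear j) hα.le) hα.le)

lemma norm_rpow_mul_norm_le_of_energy {v : ℂ} {h : ℝ} (hm : ∀ j, 0 ≤ m j) (hα : 0 < α)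
    (hx : 0 < ‖x‖) (hx1 : ‖x‖ ≤ 1) (hnear : ∀ j, ‖x‖ ≤ ‖x - c j‖)
    (hE : 1 / 2 * ‖v‖ ^ 2 - potential c m α x = h) :
    ‖x‖ ^ (α / 2) * ‖v‖ ≤ √(2 * (|h| + ∑ j, m j / α)) := by
  set A := ∑ j, m j / α
  have hxα : 0 < ‖x‖ ^ α := by positivity
  have hxα1 : ‖x‖ ^ α ≤ 1 := Real.rpow_le_one hx.le hx1 hα.le
  have hV : potential c m α x * ‖x‖ ^ α ≤ A := (le_div_iff₀ hxα).1 (potential_le hm hα hx hnear)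
  have hh : h * ‖x‖ ^ α ≤ |h| := by nlinarith [le_abs_self h, abs_nonneg h]
  have hsq : (‖x‖ ^ (α / 2)) ^ 2 = ‖x‖ ^ α := by
    rw [← Real.rpow_natCast, ← Real.rpow_mul hx.le]
    norm_num
  refine Real.le_sqrt_of_sq_le ?_
  rw [mul_pow, hsq]
  nlinarith

lemma abs_im_conj_mul_force_le {r : ℝ} (hm : ∀ j, 0 ≤ m j) (hα : 0 ≤ α + 2) (hr : 0 < r)
    (hrc : ∀ j, c j ≠ 0 → r ≤ ‖x - c j‖) :
    |(conj x * force c m α x).im| ≤ (∑ j, m j * ‖c j‖ / r ^ (α + 2)) * ‖x‖ := by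
  rw [force, mul_neg, Complex.neg_im, abs_neg, Finset.mul_sum, Complex.im_sum, Finset.sum_mul]
  refine (Finset.abs_sum_le_sum_abs _ _).trans (Finset.sum_le_sum fun j _ => ?_)
  set D := ‖x - c j‖ ^ (α + 2)
  have hD : 0 ≤ D := by positivity
  -- `conj x * x` is real, so only the offset `c j` of the centre produces torque.
  have him : (conj x * ((m j : ℂ) * (x - c j) / (D : ℂ))).im = -(m j / D * (conj x * c j).im) := by
    simp [Complex.mul_im, Complex.div_ofReal_re, Complex.div_ofReal_im]
    ring
  have hcoef : m j * ‖c j‖ / D ≤ m j * ‖c j‖ / r ^ (α + 2) := by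
    rcases eq_or_ne (c j) 0 with hj | hj
    · simp [hj]
    · exact div_le_div_of_nonneg_left (by positivity [hm j]) (by positivity)
        (Real.rpow_le_rpow hr.le (hrc j hj) hα)
  rw [him, abs_neg, abs_mul, abs_of_nonneg (div_nonneg (hm j) hD)]
  calc m j / D * |(conj x * c j).im| ≤ m j / D * (‖x‖ * ‖c j‖) := by
        gcongr
        · exact div_nonneg (hm j) hD
        · exact abs_im_conj_mul_le _ _
    _ = m j * ‖c j‖ / D * ‖x‖ := by ring
    _ ≤ m j * ‖c j‖ / r ^ (α + 2) * ‖x‖ := by gcongr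

end NCenter

theorem stmt_7_general
    (N : ℕ) (hN : 0 < N) (c : Fin N → ℂ) (m : Fin N → ℝ)
    (hm : ∀ j, 0 < m j)
    (α : ℝ) (hα1 : 1 ≤ α) (hα2 : α < 2)
    (hc1 : c ⟨0, hN⟩ = 0)
    (δ : ℝ) (hδ : 0 < δ) (y : ℝ → ℂ)
    (hy_cont : ContinuousOn y (Set.Icc (-δ) δ))
    (hy0 : y 0 = 0)
    (hy_ne : ∀ t ∈ Set.Icc (-δ) δ, t ≠ 0 → ∀ j, y t ≠ c j)
    (hy_d1 : ∀ t ∈ Set.Icc (-δ) δ, t ≠ 0 → DifferentiableAt ℝ y t)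
    (hy_d2 : ∀ t ∈ Set.Icc (-δ) δ, t ≠ 0 → DifferentiableAt ℝ (deriv y) t)
    (hy_eq : ∀ t ∈ Set.Icc (-δ) δ, t ≠ 0 →
      deriv (deriv y) t = -∑ j, (m j : ℂ) * (y t - c j) / ((‖y t - c j‖ ^ (α + 2) : ℝ) : ℂ))
    (h : ℝ)
    (hy_energy : ∀ t ∈ Set.Icc (-δ) δ, t ≠ 0 →
      (1 / 2) * ‖deriv y t‖ ^ 2 - ∑ j, m j / (α * ‖y t - c j‖ ^ α) = h) :
    ∃ C : ℝ, 0 < C ∧ ∃ δ₀ : ℝ, 0 < δ₀ ∧ δ₀ ≤ δ ∧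
      ∀ t ∈ Set.Icc (-δ₀) δ₀, t ≠ 0 →
        |((starRingEnd ℂ) (y t) * deriv y t).im| ≤ C * |t| ^ ((4 + α) / (2 + α)) := by
  have hm0 : ∀ j, 0 ≤ m j := fun j => (hm j).le
  obtain ⟨r, hr0, hr1, hrc⟩ := exists_pos_le_norm_sub_of_norm_le c
  obtain ⟨d, hd0, hdδ, hyr⟩ := exists_pos_forall_mem_Icc_norm_le hδ hy_cont hy0 hr0
  have hsub : Icc (-d) d ⊆ Icc (-δ) δ := Icc_subset_Icc (neg_le_neg hdδ) hdδ
  have hnear : ∀ t ∈ Icc (-d) d, ∀ j, ‖y t‖ ≤ ‖y t - c j‖ := fun t ht j => by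
    rcases eq_or_ne (c j) 0 with hj | hj
    · rw [hj, sub_zero]
    · exact (hyr t ht).trans (hrc _ (hyr t ht) j hj)
  set K := √(2 * (|h| + ∑ j, m j / α))
  set M := ∑ j, m j * ‖c j‖ / r ^ (α + 2)
  have hvel : ∀ t ∈ Icc (-d) d, t ≠ 0 → ‖y t‖ ^ (α / 2) * ‖deriv y t‖ ≤ K := fun t ht ht0 =>
    NCenter.norm_rpow_mul_norm_le_of_energy hm0 (by linarith)
      (norm_pos_iff.2 (hc1 ▸ hy_ne t (hsub ht) ht0 ⟨0, hN⟩)) ((hyr t ht).trans hr1)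
      (hnear t ht) (hy_energy t (hsub ht) ht0)
  have htorque : ∀ t ∈ Icc (-d) d, t ≠ 0 →
      |(conj (y t) * deriv (deriv y) t).im| ≤ M * ‖y t‖ := fun t ht ht0 => by
    rw [hy_eq t (hsub ht) ht0]
    exact NCenter.abs_im_conj_mul_force_le hm0 (by linarith) hr0 (hrc _ (hyr t ht))
  have hM : 0 ≤ M := Finset.sum_nonneg fun j _ => by positivity [hm0 j]
  have hexp : (4 + α) / (2 + α) = (α / 2 + 2) / (α / 2 + 1) := by field_simp; ring
  refine ⟨max (M * ((α / 2 + 1) * K) ^ (α / 2 + 1)⁻¹) 1, lt_max_of_lt_right one_pos,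
    d, hd0, hdδ, fun t ht _ => ?_⟩
  rw [hexp]
  exact (abs_im_conj_mul_deriv_le (by linarith) (by linarith) hM (hy_cont.mono hsub) hy0
    (fun s hs => hy_d1 s (hsub hs)) (fun s hs => hy_d2 s (hsub hs)) hvel htorque ht).trans
    (mul_le_mul_of_nonneg_right (le_max_left _ 1) (by positivity))

/-- decay rate of the angular momentum at a collision. -/
theorem stmt_7
    (N : ℕ) (hN : 0 < N) (c : Fin N → ℂ) (m : Fin N → ℝ)
    (hc_inj : Function.Injective c) (hm : ∀ j, 0 < m j)
    (α : ℝ) (hα1 : 1 ≤ α) (hα2 : α < 2)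
    (hc1 : c ⟨0, hN⟩ = 0)
    (δ : ℝ) (hδ : 0 < δ) (y : ℝ → ℂ)
    (hy_cont : ContinuousOn y (Set.Icc (-δ) δ))
    (hy0 : y 0 = 0)
    (hy_ne : ∀ t ∈ Set.Icc (-δ) δ, t ≠ 0 → ∀ j, y t ≠ c j)
    (hy_d1 : ∀ t ∈ Set.Icc (-δ) δ, t ≠ 0 → DifferentiableAt ℝ y t)
    (hy_d2 : ∀ t ∈ Set.Icc (-δ) δ, t ≠ 0 → DifferentiableAt ℝ (deriv y) t)
    (hy_eq : ∀ t ∈ Set.Icc (-δ) δ, t ≠ 0 →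
      deriv (deriv y) t = -∑ j, (m j : ℂ) * (y t - c j) / ((‖y t - c j‖ ^ (α + 2) : ℝ) : ℂ))
    (h : ℝ)
    (hy_energy : ∀ t ∈ Set.Icc (-δ) δ, t ≠ 0 →
      (1 / 2) * ‖deriv y t‖ ^ 2 - ∑ j, m j / (α * ‖y t - c j‖ ^ α) = h) :
    ∃ C : ℝ, 0 < C ∧ ∃ δ₀ : ℝ, 0 < δ₀ ∧ δ₀ ≤ δ ∧
      ∀ t ∈ Set.Icc (-δ₀) δ₀, t ≠ 0 →
        |((starRingEnd ℂ) (y t) * deriv y t).im| ≤ C * |t| ^ ((4 + α) / (2 + α)) :=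
  stmt_7_general N hN c m hm α hα1 hα2 hc1 δ hδ y hy_cont hy0 hy_ne hy_d1 hy_d2 hy_eq h hy_energy
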